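/- arXiv:math/0603352 — 2 statements merged into one kernel-verified Lean document; each statement's English description precedes it below -/
import Mathlib

section
/- Let K be a field, M a vector space over K, and let u, x, v, y ∈ M satisfy u ∧ x = v ∧ y and u ∧ x ≠ 0 in the second exterior power ⋀²_K(M). Then the K-linear span of {u, x} equals the K-linear span of {v, y}. -/
/-!
A decomposable `n`-vector `w₁ ∧ ⋯ ∧ wₙ` is nonzero exactly when the `wᵢ` are linearly
independent, so in that case `z ∧ w₁ ∧ ⋯ ∧ wₙ = 0` forces `z` into the span of the `wᵢ`.
If `v₁ ∧ ⋯ ∧ vₙ = w₁ ∧ ⋯ ∧ wₙ ≠ 0`, each `vᵢ` wedges to zero with the left side, hence with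
the right side, and so lies in the span of the `wᵢ`; by symmetry the two spans agree.
-/

/-- The wedge `u ∧ v` of two vectors of the `K`-vector space `M`, as an element of the
second exterior power `⋀²_K(M)`. -/
noncomputable def wedgeK (K : Type*) [Field K] {M : Type*} [AddCommGroup M] [Module K M]
    (u v : M) : ⋀[K]^2 M :=
  ⟨ExteriorAlgebra.ιMulti K 2 ![u, v],
   ExteriorAlgebra.ιMulti_range K 2 ⟨![u, v], rfl⟩⟩

open ExteriorAlgebra

section

variable {M : Type*} [AddCommGroup M]

theorem ι_mul_ιMulti_eq_zero_of_mem_range {R : Type*} [CommRing R] [Module R M] {n : ℕ}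
    {v : Fin n → M} {w : M} (hw : w ∈ Set.range v) : ι R w * ιMulti R n v = 0 := by
  obtain ⟨i, rfl⟩ := hw
  have h := (ιMulti R (n + 1)).map_eq_zero_of_eq (Fin.cons (v i) v) (i := 0) (j := i.succ)
    (by simp) (Fin.succ_ne_zero i).symm
  simpa [Matrix.vecTail] using h

variable {K : Type*} [Field K] [Module K M]

theorem ιMulti_ne_zero_iff_linearIndependent {n : ℕ} {v : Fin n → M} :
    ιMulti K n v ≠ 0 ↔ LinearIndependent K v := by
  refine ⟨fun h => by_contra fun hv => h ((ιMulti K n).map_linearDependent v hv), fun hv => ?_⟩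
  -- evaluate the independent family `ιMulti_family` at the full subset of `Fin n`
  have := (exteriorPower.ιMulti_family_linearIndependent_field (n := n) hv).ne_zero
    (Set.powersetCard.ofFinEmbEquiv (OrderIso.refl _).toOrderEmbedding)
  simp only [exteriorPower.ιMulti_family, Equiv.symm_apply_apply] at this
  exact fun h0 => this (Subtype.ext h0)

theorem mem_span_range_of_ι_mul_ιMulti_eq_zero {n : ℕ} {v : Fin n → M}
    (hv : LinearIndependent K v) {w : M} (hw : ι K w * ιMulti K n v = 0) :
    w ∈ Submodule.span K (Set.range v) := by
  by_contra hw'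
  refine ιMulti_ne_zero_iff_linearIndependent.mpr (linearIndependent_finCons.mpr ⟨hv, hw'⟩) ?_
  simpa [Matrix.vecTail] using hw

theorem span_range_le_of_ιMulti_eq {n : ℕ} {v w : Fin n → M} (h : ιMulti K n v = ιMulti K n w)
    (hne : ιMulti K n w ≠ 0) :
    Submodule.span K (Set.range v) ≤ Submodule.span K (Set.range w) := by
  rw [Submodule.span_le]
  rintro _ hv
  exact mem_span_range_of_ι_mul_ιMulti_eq_zero (ιMulti_ne_zero_iff_linearIndependent.mp hne)
    (h ▸ ι_mul_ιMulti_eq_zero_of_mem_range hv)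

end

/-- If `u ∧ x = v ∧ y ≠ 0` in `⋀²_K(M)`, then the `K`-linear span of `{u, x}` equals
the `K`-linear span of `{v, y}`. -/
theorem span_eq_span_of_wedge_eq_wedge
    (K : Type*) [Field K] {M : Type*} [AddCommGroup M] [Module K M]
    (u x v y : M) (heq : wedgeK K u x = wedgeK K v y) (hne : wedgeK K u x ≠ 0) :
    Submodule.span K {u, x} = Submodule.span K {v, y} := by
  have hwedge : ιMulti K 2 ![u, x] = ιMulti K 2 ![v, y] := congrArg Subtype.val heq
  have hne_ux : ιMulti K 2 ![u, x] ≠ 0 := fun h => hne (Subtype.ext h)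
  have hne_vy : ιMulti K 2 ![v, y] ≠ 0 := hwedge ▸ hne_ux
  simpa only [Matrix.range_cons_cons_empty] using
    le_antisymm (span_range_le_of_ιMulti_eq hwedge hne_vy)
      (span_range_le_of_ιMulti_eq hwedge.symm hne_ux)
end

section
/- Let a, z ∈ ℝ be nonzero, let α ∈ ℝ be irrational, and let b, z' ∈ ℝ be arbitrary. Set V = (a, 0), Z = (0, z), V' = (α·a, b), Z' = (0, z') in ℝ². Then V ∧ Z ≠ V' ∧ Z' in ⋀²_ℚ(ℝ²), the second exterior power of ℝ² viewed as a ℚ-vector space. (This is the key computation in the proof that for a purely periodic translation surface the holonomies of periodic orbits span a ℚ-vector space of dimension 2: if the J-invariant could be written both as V ∧ Z with V horizontal, Z vertical, and as V' ∧ Z' with Z' vertical and the horizontal coordinate of V' an irrational multiple of that of V, one reaches a contradiction.) -/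
/-!
Since `α` is irrational, `a` and `α * a` are `ℚ`-linearly independent, so there are `ℚ`-linear
functionals `φ, ψ : ℝ → ℚ` with `φ a = 1`, `φ (α * a) = 0` and `ψ z = 1`. Pairing with the
functional `u ∧ v ↦ φ u.1 * ψ v.2 - φ v.1 * ψ u.2` on `⋀²_ℚ(ℝ²)` sends `V ∧ Z` to `1` and
`V' ∧ Z'` to `0`.
-/

/-- The wedge `u ∧ v` of two vectors of `ℝ²`, as an element of the second exterior
power `⋀²_ℚ(ℝ²)` of `ℝ²` regarded as a `ℚ`-vector space. -/
noncomputable def wedgeQ (u v : ℝ × ℝ) : ⋀[ℚ]^2 (ℝ × ℝ) :=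
  ⟨ExteriorAlgebra.ιMulti ℚ 2 ![u, v],
   ExteriorAlgebra.ιMulti_range ℚ 2 ⟨![u, v], rfl⟩⟩

theorem wedgeQ_eq_ιMulti (u v : ℝ × ℝ) : wedgeQ u v = exteriorPower.ιMulti ℚ 2 ![u, v] := rfl

theorem exteriorPower.alternatingMapToDual_apply_ιMulti_fin_two {R M : Type*} [CommRing R]
    [AddCommGroup M] [Module R M] (f g : Module.Dual R M) (u v : M) :
    alternatingMapToDual R M 2 ![f, g] (ιMulti R 2 ![u, v]) = f u * g v - g u * f v := by
  simp [Matrix.det_fin_two]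

theorem Submodule.exists_dual_eq_one_of_notMem {K V : Type*} [Field K] [AddCommGroup V]
    [Module K V] {p : Submodule K V} {x : V} (hx : x ∉ p) :
    ∃ f : Module.Dual K V, f x = 1 ∧ ∀ y ∈ p, f y = 0 := by
  obtain ⟨f, hfx, hfp⟩ := p.exists_dual_map_eq_bot_of_notMem hx inferInstance
  refine ⟨(f x)⁻¹ • f, inv_mul_cancel₀ hfx, fun y hy => ?_⟩
  have hfy : f y = 0 := (Submodule.mem_bot K).1 (hfp ▸ Submodule.mem_map_of_mem hy)
  simp [hfy]

theorem Irrational.notMem_span_mul {α a : ℝ} (hα : Irrational α) (ha : a ≠ 0) :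
    a ∉ ℚ ∙ (α * a) := by
  rw [Submodule.mem_span_singleton]
  rintro ⟨q, hq⟩
  rw [Rat.smul_def, ← mul_assoc] at hq
  have hqα : (q : ℝ) * α = 1 := mul_right_cancel₀ ha (hq.trans (one_mul a).symm)
  exact hα.ne_rat q⁻¹ (by push_cast; exact eq_inv_of_mul_eq_one_right hqα)

/-- Key computation: if `a, z ≠ 0`, `α` is irrational, `V = (a, 0)`, `Z = (0, z)`,
`V' = (α·a, b)`, `Z' = (0, z')`, then `V ∧ Z ≠ V' ∧ Z'` in `⋀²_ℚ(ℝ²)`. -/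
theorem wedgeQ_ne_of_irrational (a z : ℝ) (ha : a ≠ 0) (hz : z ≠ 0)
    (α : ℝ) (hα : Irrational α) (b z' : ℝ) :
    wedgeQ (a, 0) (0, z) ≠ wedgeQ (α * a, b) (0, z') := by
  obtain ⟨φ, hφa, hφ⟩ := Submodule.exists_dual_eq_one_of_notMem (hα.notMem_span_mul ha)
  obtain ⟨ψ, hψz, -⟩ :=
    Submodule.exists_dual_eq_one_of_notMem (p := ⊥) (mt (Submodule.mem_bot ℚ).1 hz)
  intro h
  have hpair := congrArg (exteriorPower.alternatingMapToDual ℚ (ℝ × ℝ) 2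
    ![φ ∘ₗ LinearMap.fst ℚ ℝ ℝ, ψ ∘ₗ LinearMap.snd ℚ ℝ ℝ]) h
  simp_rw [wedgeQ_eq_ιMulti, exteriorPower.alternatingMapToDual_apply_ιMulti_fin_two] at hpair
  simp [hφa, hψz, hφ (α * a) (Submodule.mem_span_singleton_self _)] at hpair
end
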